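/- (Twisted lattice-point recursion, generalizing the Chapman–Mulase–Safnuk recursion.) Let (A, η) be a finite-dimensional commutative Frobenius algebra over a field K of characteristic zero, with basis e₁, …, e_s, Euler element 𝐞, and amplitudes Ω_{g,n}(v₁,…,vₙ) = ε(v₁⋯vₙ·𝐞^g). Suppose given, for all integers g ≥ 0, n ≥ 1, functions N_{g,n} : (ℤ_{≥0})^n → K (with N_{g,n} := 0 whenever g < 0) which satisfy, for every (g,n) with 2g−2+n > 0 and every μ ∈ (ℤ_{≥0})^n: μ₁ N_{g,n}(μ) = (1/2) Σ_{j=2}^{n} [ Σ_{q=0}^{μ₁+μ_j} q(μ₁+μ_j−q) N_{g,n−1}(q, μ_{[n]∖{1,j}}) + H(μ₁−μ_j) Σ_{q=0}^{μ₁−μ_j} q(μ₁−μ_j−q) N_{g,n−1}(q, μ_{[n]∖{1,j}}) − H(μ_j−μ₁) Σ_{q=0}^{μ_j−μ₁} q(μ_j−μ₁−q) N_{g,n−1}(q, μ_{[n]∖{1,j}}) ] + (1/2) Σ_{0 ≤ q₁+q₂ ≤ μ₁} q₁ q₂ (μ₁−q₁−q₂) [ N_{g−1,n+1}(q₁, q₂,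 μ_{[n]∖{1}}) + Σ^{stable}_{g₁+g₂=g, I⊔J={2,…,n}} N_{g₁,|I|+1}(q₁, μ_I) N_{g₂,|J|+1}(q₂, μ_J) ], where H is the Heaviside function (H(x)=1 if x>0, H(x)=0 if x≤0) and 'stable' excludes the pairs (g_i, |·|+1) of type (0,1) and (0,2). Define 𝒩_{g,n}(μ; v₁,…,vₙ) := N_{g,n}(μ) · Ω_{g,n}(v₁,…,vₙ). Then the twisted recursion holds: μ₁ 𝒩_{g,n}(μ; v₁,…,vₙ) equals the same right-hand side with each N_{g,n−1}(q, μ_{[n]∖{1,j}}) replaced by 𝒩_{g,n−1}(q, μ_{[n]∖{1,j}}; v₁·v_j, v_{[n]∖{1,j}}), the term N_{g−1,n+1}(q₁,q₂,μ_{[n]∖{1}}) replaced by Σ_{i,j,a,b} η(v₁, e_i·e_j) η^{ia} η^{jb} 𝒩_{g−1,n+1}(q₁, q₂, μ_{[n]∖{1}}; e_a, e_b, v_{[n]∖{1}}), and each product N_{g₁,|I|+1}(q₁,μ_I) N_{g₂,|J|+1}(q₂,μ_J) replaced by Σ_{k,ℓ,a,b} η(v₁, e_k·e_ℓ) η^{ka}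 η^{ℓb} 𝒩_{g₁,|I|+1}(q₁, μ_I; e_a, v_I) 𝒩_{g₂,|J|+1}(q₂, μ_J; e_b, v_J). -/

import Mathlib

/-!
Every term of the twisted recursion is the corresponding term of the untwisted one times the
same amplitude `Ω_{g,n}(v) = ε(v₁⋯vₙ·𝐞^g)`. For the contraction terms this is because
`v₁·v_j` leaves the product `v₁⋯vₙ` unchanged. The other two terms contract with the coproduct
`Δ(x) = Σ η(x, e_i·e_j) η^{ia} η^{jb} e_a ⊗ e_b`. Because `(η^{ab})` inverts the Gram matrix,
`Σ η(y, e_i) η^{ia} e_a = y`, so multiplying the two legs of `Δ(x)` gives `x·𝐞`. That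
raises the genus of `Ω_{g-1,n+1}` by one. Pairing the two legs with `ε(·X)` and `ε(·Y)` gives
`ε(xXY)`, which glues `Ω_{g₁}` and `Ω_{g₂}` into `Ω_{g₁+g₂}`. The twisted recursion is then the
untwisted one multiplied by `Ω_{g,n}(v)`.
-/

/-- The subtuple of a tuple `f : Fin m → α` indexed by a finite set `S` of indices,
taken in increasing order. -/
noncomputable def subT {α : Type*} {m : ℕ} (f : Fin m → α) (S : Finset (Fin m)) :
    Fin S.card → α :=
  fun i => f (S.orderIsoOfFin rfl i)

/-- The 2D TQFT twist `𝒩_{g,n}(μ; v₁,…,vₙ) := N_{g,n}(μ)·Ω_{g,n}(v₁,…,vₙ)` of the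
lattice-point counting function `Nf`, where `Ω_{g,n}(v₁,…,vₙ) = ε(v₁⋯vₙ·𝐞^g)`,
`ε = η(1,·)` and `E = 𝐞` is the Euler element (for `g < 0` the convention
`N_{g,n} = 0` makes the value vanish). -/
noncomputable def twistN {K A : Type*} [Field K] [CommRing A] [Algebra K A]
    (η : LinearMap.BilinForm K A) (E : A)
    (Nf : ℤ → (n : ℕ) → (Fin n → ℕ) → K)
    (g : ℤ) (n : ℕ) (μ : Fin n → ℕ) (v : Fin n → A) : K :=
  Nf g n μ * η 1 ((∏ i, v i) * E ^ g.toNat)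

theorem prod_subT {M : Type*} [CommMonoid M] {m : ℕ} (f : Fin m → M) (S : Finset (Fin m)) :
    ∏ i, subT f S i = ∏ i ∈ S, f i := by
  rw [← Finset.prod_coe_sort S f]
  exact Fintype.prod_equiv (S.orderIsoOfFin rfl).toEquiv _ _ fun _ => rfl

theorem prod_cons_mul_subT_compl {M : Type*} [CommMonoid M] {m : ℕ} (v : Fin (m + 1) → M)
    (j : Fin m) :
    ∏ i, (Fin.cons (v 0 * v j.succ) (subT (Fin.tail v) {j}ᶜ) :
      Fin (({j}ᶜ : Finset (Fin m)).card + 1) → M) i = ∏ i, v i := by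
  rw [Fin.prod_cons, prod_subT, Fin.prod_univ_succ v, ← Finset.prod_mul_prod_compl {j},
    Finset.prod_singleton, mul_assoc]
  rfl

section Frobenius

variable {K A : Type*} [Field K] [CommRing A] [Algebra K A] {η : LinearMap.BilinForm K A}
  (hinv : ∀ u v w : A, η (u * v) w = η u (v * w))
  {s : ℕ} {e : Module.Basis (Fin s) K A} {N : Matrix (Fin s) (Fin s) K}
  (hN : (Matrix.of fun i j => η (e i) (e j)) * N = 1)
  {E : A} (hE : E = ∑ a, ∑ b, N a b • (e a * e b))

include hinv in
theorem eta_eq_eta_one_mul (u v : A) : η u v = η 1 (u * v) := by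
  rw [← hinv, one_mul]

include hN in
theorem sum_eta_basis_mul_eq_repr (y : A) (a : Fin s) :
    ∑ i, η y (e i) * N i a = e.repr y a := by
  have hgram : (fun i => η y (e i)) =
      Matrix.vecMul (e.repr y) (Matrix.of fun i j => η (e i) (e j)) := by
    ext i
    conv_lhs => rw [← e.sum_repr y]
    simp only [map_sum, map_smul, LinearMap.coe_sum, Finset.sum_apply, LinearMap.smul_apply,
      smul_eq_mul, Matrix.vecMul, dotProduct, Matrix.of_apply]
  calc ∑ i, η y (e i) * N i a = Matrix.vecMul (fun i => η y (e i)) N a := rfl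
    _ = e.repr y a := by rw [hgram, Matrix.vecMul_vecMul, hN, Matrix.vecMul_one]

include hN in
theorem sum_sum_eta_basis_mul_mul_eta (y z : A) :
    ∑ i, ∑ a, η y (e i) * N i a * η (e a) z = η y z := by
  calc ∑ i, ∑ a, η y (e i) * N i a * η (e a) z
      = ∑ a, (∑ i, η y (e i) * N i a) * η (e a) z := by
        rw [Finset.sum_comm]; simp only [Finset.sum_mul]
    _ = η (∑ a, e.repr y a • e a) z := by
        simp only [sum_eta_basis_mul_eq_repr hN, map_sum, map_smul, LinearMap.coe_sum,
          Finset.sum_apply, LinearMap.smul_apply, smul_eq_mul]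
    _ = η y z := by rw [e.sum_repr]

/- In the names below, `coproduct` stands for the weights `η x (e i * e j) * N i a * N j b`,
the coefficients of `Δ x = ∑ η(x, e_i e_j) η^{ia} η^{jb} e_a ⊗ e_b`. -/

include hinv hN hE in
theorem sum_coproduct_eta_one_mul_mul (x W : A) :
    ∑ i, ∑ j, ∑ a, ∑ b, η x (e i * e j) * N i a * N j b * η 1 (e a * e b * W) =
      η 1 (x * E * W) := by
  calc ∑ i, ∑ j, ∑ a, ∑ b, η x (e i * e j) * N i a * N j b * η 1 (e a * e b * W)
      = ∑ i, ∑ a, N i a * ∑ j, ∑ b, η (x * e i) (e j) * N j b * η (e b) (e a * W) := by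
        simp only [Finset.mul_sum]
        refine Finset.sum_congr rfl fun i _ => Finset.sum_comm.trans ?_
        refine Finset.sum_congr rfl fun a _ => Finset.sum_congr rfl fun j _ =>
          Finset.sum_congr rfl fun b _ => ?_
        rw [← hinv, eta_eq_eta_one_mul hinv (e b), show e b * (e a * W) = e a * e b * W by ring]
        ring
    _ = η 1 (x * E * W) := by
        simp only [sum_sum_eta_basis_mul_mul_eta hN, hE, Finset.mul_sum, Finset.sum_mul, map_sum]
        refine Finset.sum_congr rfl fun i _ => Finset.sum_congr rfl fun a _ => ?_
        rw [mul_smul_comm, smul_mul_assoc, map_smul, smul_eq_mul,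
          eta_eq_eta_one_mul hinv (x * e i)]
        congr 2
        ring

include hinv hN in
theorem sum_coproduct_eta_one_mul_mul_eta_one_mul (x X Y : A) :
    ∑ k, ∑ l, ∑ a, ∑ b, η x (e k * e l) * N k a * N l b * (η 1 (e a * X) * η 1 (e b * Y)) =
      η 1 (x * X * Y) := by
  calc ∑ k, ∑ l, ∑ a, ∑ b, η x (e k * e l) * N k a * N l b * (η 1 (e a * X) * η 1 (e b * Y))
      = ∑ k, ∑ a, N k a * η (e a) X * ∑ l, ∑ b, η (x * e k) (e l) * N l b * η (e b) Y := by
        simp only [Finset.mul_sum]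
        refine Finset.sum_congr rfl fun k _ => Finset.sum_comm.trans ?_
        refine Finset.sum_congr rfl fun a _ => Finset.sum_congr rfl fun l _ =>
          Finset.sum_congr rfl fun b _ => ?_
        rw [← hinv, ← eta_eq_eta_one_mul hinv, ← eta_eq_eta_one_mul hinv]
        ring
    _ = ∑ k, ∑ a, η (x * Y) (e k) * N k a * η (e a) X := by
        refine Finset.sum_congr rfl fun k _ => Finset.sum_congr rfl fun a _ => ?_
        rw [sum_sum_eta_basis_mul_mul_eta hN, eta_eq_eta_one_mul hinv (x * e k),
          eta_eq_eta_one_mul hinv (x * Y), mul_right_comm x (e k)]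
        ring
    _ = η 1 (x * X * Y) := by
        rw [sum_sum_eta_basis_mul_mul_eta hN, eta_eq_eta_one_mul hinv, mul_right_comm]

variable {Nf : ℤ → (n : ℕ) → (Fin n → ℕ) → K}
  (hNneg : ∀ g : ℤ, g < 0 → ∀ (n : ℕ) (μ : Fin n → ℕ), Nf g n μ = 0)

include hinv hN hE hNneg in
theorem sum_coproduct_twistN_sub_one (g m : ℕ) (ν : Fin (m + 2) → ℕ)
    (v : Fin (m + 1) → A) :
    ∑ i, ∑ j, ∑ a, ∑ b, η (v 0) (e i * e j) * N i a * N j b *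
        twistN η E Nf ((g : ℤ) - 1) (m + 2) ν (Fin.cons (e a) (Fin.cons (e b) (Fin.tail v))) =
      Nf ((g : ℤ) - 1) (m + 2) ν * η 1 ((∏ i, v i) * E ^ g) := by
  rcases g with _ | g
  · simp [twistN, hNneg (-1) (by norm_num)]
  rw [show ((g + 1 : ℕ) : ℤ) - 1 = g by push_cast; ring]
  have hterm : ∀ i j a b, η (v 0) (e i * e j) * N i a * N j b *
      twistN η E Nf g (m + 2) ν (Fin.cons (e a) (Fin.cons (e b) (Fin.tail v))) =
      Nf g (m + 2) ν * (η (v 0) (e i * e j) * N i a * N j b *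
        η 1 (e a * e b * ((∏ i, Fin.tail v i) * E ^ g))) := by
    intro i j a b
    rw [twistN, Int.toNat_natCast, Fin.prod_cons, Fin.prod_cons, ← mul_assoc (e a),
      mul_assoc (e a * e b)]
    ring
  simp only [hterm, ← Finset.mul_sum]
  rw [sum_coproduct_eta_one_mul_mul hinv hN hE, Fin.prod_univ_succ, pow_succ]
  congr 2
  simp only [Fin.tail]
  ring

include hinv hN hNneg in
theorem sum_coproduct_twistN_mul_twistN (g g₁ m : ℕ) (S : Finset (Fin m))
    (ν₁ : Fin (S.card + 1) → ℕ) (ν₂ : Fin (Sᶜ.card + 1) → ℕ) (v : Fin (m + 1) → A) :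
    ∑ k, ∑ l, ∑ a, ∑ b, η (v 0) (e k * e l) * N k a * N l b *
        (twistN η E Nf g₁ (S.card + 1) ν₁ (Fin.cons (e a) (subT (Fin.tail v) S)) *
          twistN η E Nf ((g : ℤ) - g₁) (Sᶜ.card + 1) ν₂
            (Fin.cons (e b) (subT (Fin.tail v) Sᶜ))) =
      Nf g₁ (S.card + 1) ν₁ * Nf ((g : ℤ) - g₁) (Sᶜ.card + 1) ν₂ * η 1 ((∏ i, v i) * E ^ g) := by
  obtain hlt | ⟨d, rfl⟩ : g < g₁ ∨ ∃ d, g = g₁ + d :=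
    (lt_or_ge g g₁).imp_right Nat.exists_eq_add_of_le
  · simp [twistN, hNneg ((g : ℤ) - g₁) (by omega)]
  rw [show ((g₁ + d : ℕ) : ℤ) - g₁ = d by push_cast; ring]
  have hterm : ∀ k l a b, η (v 0) (e k * e l) * N k a * N l b *
      (twistN η E Nf g₁ (S.card + 1) ν₁ (Fin.cons (e a) (subT (Fin.tail v) S)) *
        twistN η E Nf d (Sᶜ.card + 1) ν₂ (Fin.cons (e b) (subT (Fin.tail v) Sᶜ))) =
      Nf g₁ (S.card + 1) ν₁ * Nf d (Sᶜ.card + 1) ν₂ *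
        (η (v 0) (e k * e l) * N k a * N l b *
          (η 1 (e a * ((∏ i ∈ S, Fin.tail v i) * E ^ g₁)) *
            η 1 (e b * ((∏ i ∈ Sᶜ, Fin.tail v i) * E ^ d)))) := by
    intro k l a b
    rw [twistN, twistN, Int.toNat_natCast, Int.toNat_natCast, Fin.prod_cons, Fin.prod_cons,
      prod_subT, prod_subT, mul_assoc (e a), mul_assoc (e b)]
    ring
  simp only [hterm, ← Finset.mul_sum]
  rw [sum_coproduct_eta_one_mul_mul_eta_one_mul hinv hN, Fin.prod_univ_succ, pow_add,
    ← Finset.prod_mul_prod_compl S]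
  congr 2
  simp only [Fin.tail]
  ring

end Frobenius

theorem stmt12_general (K A : Type*) [Field K] [CommRing A] [Algebra K A]
    (η : LinearMap.BilinForm K A)
    (hinv : ∀ u v w : A, η (u * v) w = η u (v * w))
    {s : ℕ} (e : Module.Basis (Fin s) K A)
    (N : Matrix (Fin s) (Fin s) K)
    (hN : (Matrix.of fun i j => η (e i) (e j)) * N = 1)
    (E : A) (hE : E = ∑ a, ∑ b, N a b • (e a * e b))
    (Nf : ℤ → (n : ℕ) → (Fin n → ℕ) → K)
    (hNneg : ∀ g : ℤ, g < 0 → ∀ (n : ℕ) (μ : Fin n → ℕ), Nf g n μ = 0)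
    (hrec : ∀ (g m : ℕ) (μ : Fin (m + 1) → ℕ),
      0 < 2 * (g : ℤ) - 2 + (m + 1) →
      (μ 0 : K) * Nf g (m + 1) μ =
        (1 / 2 : K) * (∑ j : Fin m,
            ((∑ q ∈ Finset.range (μ 0 + μ j.succ + 1),
                (q : K) * ((μ 0 + μ j.succ - q : ℕ) : K) *
                  Nf g (({j}ᶜ : Finset (Fin m)).card + 1)
                    (Fin.cons q (subT (Fin.tail μ) {j}ᶜ)))
              + (if μ j.succ < μ 0 then (1 : K) else 0) *
                  ∑ q ∈ Finset.range (μ 0 - μ j.succ + 1),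
                    (q : K) * ((μ 0 - μ j.succ - q : ℕ) : K) *
                      Nf g (({j}ᶜ : Finset (Fin m)).card + 1)
                        (Fin.cons q (subT (Fin.tail μ) {j}ᶜ))
              - (if μ 0 < μ j.succ then (1 : K) else 0) *
                  ∑ q ∈ Finset.range (μ j.succ - μ 0 + 1),
                    (q : K) * ((μ j.succ - μ 0 - q : ℕ) : K) *
                      Nf g (({j}ᶜ : Finset (Fin m)).card + 1)
                        (Fin.cons q (subT (Fin.tail μ) {j}ᶜ))))
        + (1 / 2 : K) * ∑ q₁ ∈ Finset.range (μ 0 + 1),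
            ∑ q₂ ∈ Finset.range (μ 0 + 1 - q₁),
              (q₁ : K) * (q₂ : K) * ((μ 0 - q₁ - q₂ : ℕ) : K) *
                (Nf ((g : ℤ) - 1) (m + 2)
                    (Fin.cons q₁ (Fin.cons q₂ (Fin.tail μ)))
                  + ∑ g₁ ∈ Finset.range (g + 1), ∑ S : Finset (Fin m),
                      if (g₁ = 0 ∧ S.card ≤ 1) ∨ (g₁ = g ∧ Sᶜ.card ≤ 1) then 0
                      else
                        Nf g₁ (S.card + 1) (Fin.cons q₁ (subT (Fin.tail μ) S)) *
                          Nf ((g : ℤ) - g₁) (Sᶜ.card + 1)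
                            (Fin.cons q₂ (subT (Fin.tail μ) Sᶜ)))) :
    ∀ (g m : ℕ) (μ : Fin (m + 1) → ℕ) (v : Fin (m + 1) → A),
      0 < 2 * (g : ℤ) - 2 + (m + 1) →
      (μ 0 : K) * twistN η E Nf g (m + 1) μ v =
        (1 / 2 : K) * (∑ j : Fin m,
            ((∑ q ∈ Finset.range (μ 0 + μ j.succ + 1),
                (q : K) * ((μ 0 + μ j.succ - q : ℕ) : K) *
                  twistN η E Nf g (({j}ᶜ : Finset (Fin m)).card + 1)
                    (Fin.cons q (subT (Fin.tail μ) {j}ᶜ))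
                    (Fin.cons (v 0 * v j.succ) (subT (Fin.tail v) {j}ᶜ)))
              + (if μ j.succ < μ 0 then (1 : K) else 0) *
                  ∑ q ∈ Finset.range (μ 0 - μ j.succ + 1),
                    (q : K) * ((μ 0 - μ j.succ - q : ℕ) : K) *
                      twistN η E Nf g (({j}ᶜ : Finset (Fin m)).card + 1)
                        (Fin.cons q (subT (Fin.tail μ) {j}ᶜ))
                        (Fin.cons (v 0 * v j.succ) (subT (Fin.tail v) {j}ᶜ))
              - (if μ 0 < μ j.succ then (1 : K) else 0) *
                  ∑ q ∈ Finset.range (μ j.succ - μ 0 + 1),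
                    (q : K) * ((μ j.succ - μ 0 - q : ℕ) : K) *
                      twistN η E Nf g (({j}ᶜ : Finset (Fin m)).card + 1)
                        (Fin.cons q (subT (Fin.tail μ) {j}ᶜ))
                        (Fin.cons (v 0 * v j.succ) (subT (Fin.tail v) {j}ᶜ))))
        + (1 / 2 : K) * ∑ q₁ ∈ Finset.range (μ 0 + 1),
            ∑ q₂ ∈ Finset.range (μ 0 + 1 - q₁),
              (q₁ : K) * (q₂ : K) * ((μ 0 - q₁ - q₂ : ℕ) : K) *
                ((∑ i, ∑ j, ∑ a, ∑ b,
                    η (v 0) (e i * e j) * N i a * N j b *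
                      twistN η E Nf ((g : ℤ) - 1) (m + 2)
                        (Fin.cons q₁ (Fin.cons q₂ (Fin.tail μ)))
                        (Fin.cons (e a) (Fin.cons (e b) (Fin.tail v))))
                  + ∑ g₁ ∈ Finset.range (g + 1), ∑ S : Finset (Fin m),
                      if (g₁ = 0 ∧ S.card ≤ 1) ∨ (g₁ = g ∧ Sᶜ.card ≤ 1) then 0
                      else
                        ∑ k, ∑ l, ∑ a, ∑ b,
                          η (v 0) (e k * e l) * N k a * N l b *
                            (twistN η E Nf g₁ (S.card + 1)
                                (Fin.cons q₁ (subT (Fin.tail μ) S))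
                                (Fin.cons (e a) (subT (Fin.tail v) S)) *
                              twistN η E Nf ((g : ℤ) - g₁) (Sᶜ.card + 1)
                                (Fin.cons q₂ (subT (Fin.tail μ) Sᶜ))
                                (Fin.cons (e b) (subT (Fin.tail v) Sᶜ)))) := by
  intro g m μ v hstable
  have hlhs : (μ 0 : K) * twistN η E Nf g (m + 1) μ v =
      (μ 0 * Nf g (m + 1) μ) * η 1 ((∏ i, v i) * E ^ g) := by
    rw [twistN, Int.toNat_natCast, mul_assoc]
  rw [hlhs, hrec g m μ hstable]
  simp only [sum_coproduct_twistN_sub_one hinv hN hE hNneg,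
    sum_coproduct_twistN_mul_twistN hinv hN hNneg]
  simp only [twistN, Int.toNat_natCast, prod_cons_mul_subT_compl]
  simp only [add_mul, sub_mul, ite_mul, zero_mul, one_mul, Finset.sum_mul, mul_assoc]

/-- (Twisted lattice-point recursion, generalizing the
Chapman–Mulase–Safnuk recursion.) If the lattice-point counting functions `N_{g,n}`
satisfy the CMS recursion (with Heaviside cutoffs and stability excluding `(0,1)` and
`(0,2)` pieces in the splitting sum), then their twists
`𝒩_{g,n}(μ; v) = N_{g,n}(μ)·Ω_{g,n}(v)` by the 2D TQFT of the Frobenius algebra `(A, η)`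
satisfy the twisted recursion, in which genus–reduction and splitting terms are contracted
through the coproduct coefficients `Σ η(v₁, e_i·e_j) η^{ia} η^{jb} (…e_a…)(…e_b…)`. -/
theorem stmt12 (K A : Type*) [Field K] [CharZero K] [CommRing A] [Algebra K A]
    (η : LinearMap.BilinForm K A)
    (hsym : ∀ u v : A, η u v = η v u)
    (hnd : ∀ v : A, (∀ u : A, η v u = 0) → v = 0)
    (hinv : ∀ u v w : A, η (u * v) w = η u (v * w))
    {s : ℕ} (e : Module.Basis (Fin s) K A)
    (N : Matrix (Fin s) (Fin s) K)
    (hN : (Matrix.of fun i j => η (e i) (e j)) * N = 1)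
    (hN' : N * (Matrix.of fun i j => η (e i) (e j)) = 1)
    (E : A) (hE : E = ∑ a, ∑ b, N a b • (e a * e b))
    (Nf : ℤ → (n : ℕ) → (Fin n → ℕ) → K)
    (hNneg : ∀ g : ℤ, g < 0 → ∀ (n : ℕ) (μ : Fin n → ℕ), Nf g n μ = 0)
    (hrec : ∀ (g m : ℕ) (μ : Fin (m + 1) → ℕ),
      0 < 2 * (g : ℤ) - 2 + (m + 1) →
      (μ 0 : K) * Nf g (m + 1) μ =
        (1 / 2 : K) * (∑ j : Fin m,
            ((∑ q ∈ Finset.range (μ 0 + μ j.succ + 1),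
                (q : K) * ((μ 0 + μ j.succ - q : ℕ) : K) *
                  Nf g (({j}ᶜ : Finset (Fin m)).card + 1)
                    (Fin.cons q (subT (Fin.tail μ) {j}ᶜ)))
              + (if μ j.succ < μ 0 then (1 : K) else 0) *
                  ∑ q ∈ Finset.range (μ 0 - μ j.succ + 1),
                    (q : K) * ((μ 0 - μ j.succ - q : ℕ) : K) *
                      Nf g (({j}ᶜ : Finset (Fin m)).card + 1)
                        (Fin.cons q (subT (Fin.tail μ) {j}ᶜ))
              - (if μ 0 < μ j.succ then (1 : K) else 0) *
                  ∑ q ∈ Finset.range (μ j.succ - μ 0 + 1),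
                    (q : K) * ((μ j.succ - μ 0 - q : ℕ) : K) *
                      Nf g (({j}ᶜ : Finset (Fin m)).card + 1)
                        (Fin.cons q (subT (Fin.tail μ) {j}ᶜ))))
        + (1 / 2 : K) * ∑ q₁ ∈ Finset.range (μ 0 + 1),
            ∑ q₂ ∈ Finset.range (μ 0 + 1 - q₁),
              (q₁ : K) * (q₂ : K) * ((μ 0 - q₁ - q₂ : ℕ) : K) *
                (Nf ((g : ℤ) - 1) (m + 2)
                    (Fin.cons q₁ (Fin.cons q₂ (Fin.tail μ)))
                  + ∑ g₁ ∈ Finset.range (g + 1), ∑ S : Finset (Fin m),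
                      if (g₁ = 0 ∧ S.card ≤ 1) ∨ (g₁ = g ∧ Sᶜ.card ≤ 1) then 0
                      else
                        Nf g₁ (S.card + 1) (Fin.cons q₁ (subT (Fin.tail μ) S)) *
                          Nf ((g : ℤ) - g₁) (Sᶜ.card + 1)
                            (Fin.cons q₂ (subT (Fin.tail μ) Sᶜ)))) :
    ∀ (g m : ℕ) (μ : Fin (m + 1) → ℕ) (v : Fin (m + 1) → A),
      0 < 2 * (g : ℤ) - 2 + (m + 1) →
      (μ 0 : K) * twistN η E Nf g (m + 1) μ v =
        (1 / 2 : K) * (∑ j : Fin m,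
            ((∑ q ∈ Finset.range (μ 0 + μ j.succ + 1),
                (q : K) * ((μ 0 + μ j.succ - q : ℕ) : K) *
                  twistN η E Nf g (({j}ᶜ : Finset (Fin m)).card + 1)
                    (Fin.cons q (subT (Fin.tail μ) {j}ᶜ))
                    (Fin.cons (v 0 * v j.succ) (subT (Fin.tail v) {j}ᶜ)))
              + (if μ j.succ < μ 0 then (1 : K) else 0) *
                  ∑ q ∈ Finset.range (μ 0 - μ j.succ + 1),
                    (q : K) * ((μ 0 - μ j.succ - q : ℕ) : K) *
                      twistN η E Nf g (({j}ᶜ : Finset (Fin m)).card + 1)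
                        (Fin.cons q (subT (Fin.tail μ) {j}ᶜ))
                        (Fin.cons (v 0 * v j.succ) (subT (Fin.tail v) {j}ᶜ))
              - (if μ 0 < μ j.succ then (1 : K) else 0) *
                  ∑ q ∈ Finset.range (μ j.succ - μ 0 + 1),
                    (q : K) * ((μ j.succ - μ 0 - q : ℕ) : K) *
                      twistN η E Nf g (({j}ᶜ : Finset (Fin m)).card + 1)
                        (Fin.cons q (subT (Fin.tail μ) {j}ᶜ))
                        (Fin.cons (v 0 * v j.succ) (subT (Fin.tail v) {j}ᶜ))))
        + (1 / 2 : K) * ∑ q₁ ∈ Finset.range (μ 0 + 1),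
            ∑ q₂ ∈ Finset.range (μ 0 + 1 - q₁),
              (q₁ : K) * (q₂ : K) * ((μ 0 - q₁ - q₂ : ℕ) : K) *
                ((∑ i, ∑ j, ∑ a, ∑ b,
                    η (v 0) (e i * e j) * N i a * N j b *
                      twistN η E Nf ((g : ℤ) - 1) (m + 2)
                        (Fin.cons q₁ (Fin.cons q₂ (Fin.tail μ)))
                        (Fin.cons (e a) (Fin.cons (e b) (Fin.tail v))))
                  + ∑ g₁ ∈ Finset.range (g + 1), ∑ S : Finset (Fin m),
                      if (g₁ = 0 ∧ S.card ≤ 1) ∨ (g₁ = g ∧ Sᶜ.card ≤ 1) then 0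
                      else
                        ∑ k, ∑ l, ∑ a, ∑ b,
                          η (v 0) (e k * e l) * N k a * N l b *
                            (twistN η E Nf g₁ (S.card + 1)
                                (Fin.cons q₁ (subT (Fin.tail μ) S))
                                (Fin.cons (e a) (subT (Fin.tail v) S)) *
                              twistN η E Nf ((g : ℤ) - g₁) (Sᶜ.card + 1)
                                (Fin.cons q₂ (subT (Fin.tail μ) Sᶜ))
                                (Fin.cons (e b) (subT (Fin.tail v) Sᶜ)))) :=
  stmt12_general K A η hinv e N hN E hE Nf hNneg hrec
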